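/- In BS(n,1), conjugation by the element a^β t^r (i.e., x ↦ (a^β t^r) x (a^β t^r)⁻¹) equals the automorphism φ_{α',β'} with α' = n^r and β' = (1-n)β; hence the inner automorphism group of BS(n,1) equals {φ_{α,β} : α = n^r for some r ∈ ℤ, β ∈ (n-1)ℤ[1/n]}. -/
import Mathlib


/-- The single defining relator of the Baumslag–Solitar group `BS(n,1)`:
`t⁻¹ * aⁿ * t * a⁻¹`, where `a = FreeGroup.of false`, `t = FreeGroup.of true`. -/
def BSrel (n : ℤ) : Set (FreeGroup Bool) :=
  {(FreeGroup.of true)⁻¹ * (FreeGroup.of false) ^ n * FreeGroup.of true * (FreeGroup.of false)⁻¹}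

/-- The solvable Baumslag–Solitar group `BS(n,1) = ⟨a, t ∣ t⁻¹aⁿt = a⟩`. -/
abbrev BS (n : ℤ) : Type := PresentedGroup (BSrel n)

/-- The generator `a` of `BS(n,1)`. -/
def BSa (n : ℤ) : BS n := PresentedGroup.of false

/-- The generator `t` of `BS(n,1)`. -/
def BSt (n : ℤ) : BS n := PresentedGroup.of true

/-- `apow n k p` represents `a^(k/nᵖ) := t⁻ᵖ aᵏ tᵖ` in `BS(n,1)`. -/
def apow (n k p : ℤ) : BS n := (BSt n) ^ (-p) * (BSa n) ^ k * (BSt n) ^ p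



-- base relation
lemma BS_rel (n : ℤ) : (BSt n)⁻¹ * (BSa n) ^ n * BSt n = BSa n := by
  have h : PresentedGroup.mk (BSrel n)
      ((FreeGroup.of true)⁻¹ * (FreeGroup.of false) ^ n * FreeGroup.of true *
        (FreeGroup.of false)⁻¹) = 1 :=
    (QuotientGroup.eq_one_iff _).mpr (Subgroup.subset_normalClosure rfl)
  have h2 : (BSt n)⁻¹ * (BSa n) ^ n * BSt n * (BSa n)⁻¹ = 1 := by
    simpa [BSt, BSa, PresentedGroup.of, map_mul, map_zpow, map_inv] using h
  exact mul_inv_eq_one.mp h2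

-- conjugation of a-powers by t
lemma BS_conj_t (n m : ℤ) : (BSt n)⁻¹ * (BSa n) ^ (n * m) * BSt n = (BSa n) ^ m := by
  have : (BSa n) ^ (n * m) = ((BSa n) ^ n) ^ m := by rw [zpow_mul]
  rw [this]
  have h := BS_rel n
  calc (BSt n)⁻¹ * ((BSa n) ^ n) ^ m * BSt n
      = ((BSt n)⁻¹ * (BSa n) ^ n * ((BSt n)⁻¹)⁻¹) ^ m := by rw [conj_zpow, inv_inv]
    _ = (BSa n) ^ m := by rw [inv_inv, h]

lemma apow_succ (n m p : ℤ) : apow n m p = apow n (n * m) (p + 1) := by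
  unfold apow
  have h := BS_conj_t n m
  calc (BSt n) ^ (-p) * (BSa n) ^ m * (BSt n) ^ p
      = (BSt n) ^ (-(p+1)) * ((BSt n) * ((BSt n)⁻¹ * (BSa n) ^ (n*m) * BSt n) * (BSt n)⁻¹) * (BSt n) ^ (p+1) := by
        rw [h]; group
    _ = (BSt n) ^ (-(p+1)) * (BSa n) ^ (n*m) * (BSt n) ^ (p+1) := by group

lemma apow_rescale (n m p : ℤ) (d : ℕ) : apow n m p = apow n (n ^ d * m) (p + d) := by
  induction d with
  | zero => simp
  | succ i ih =>
      rw [ih, apow_succ]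
      congr 1
      · ring
      · push_cast; ring

lemma apow_up (n m p c : ℤ) (h : p ≤ c) :
    apow n m p = apow n (n ^ (c - p).toNat * m) c := by
  have := apow_rescale n m p (c - p).toNat
  rwa [Int.toNat_of_nonneg (by omega), show p + (c - p) = c by ring] at this

lemma apow_mul_same (n m m' p : ℤ) :
    apow n m p * apow n m' p = apow n (m + m') p := by
  unfold apow
  rw [zpow_add]
  group

lemma apow_comm (n m p m' p' : ℤ) :
    apow n m p * apow n m' p' = apow n m' p' * apow n m p := by
  rw [apow_up n m p (max p p') (le_max_left _ _),
    apow_up n m' p' (max p p') (le_max_right _ _), apow_mul_same, apow_mul_same,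
    add_comm]

lemma apow_inv (n m p : ℤ) : (apow n m p)⁻¹ = apow n (-m) p := by
  unfold apow; group

lemma t_conj_apow (n m p r : ℤ) :
    (BSt n) ^ r * apow n m p * (BSt n) ^ (-r) = apow n m (p - r) := by
  unfold apow; group

lemma apow_zero (n p : ℤ) : apow n 0 p = 1 := by unfold apow; group

lemma BSa_eq (n : ℤ) : BSa n = apow n 1 0 := by unfold apow; group

lemma conj_a (n l s r : ℤ) :
    (apow n l s * (BSt n) ^ r) * BSa n * (apow n l s * (BSt n) ^ r)⁻¹ = apow n 1 (-r) := by
  rw [mul_inv_rev, apow_inv]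
  calc apow n l s * (BSt n) ^ r * BSa n * (((BSt n) ^ r)⁻¹ * apow n (-l) s)
      = apow n l s * ((BSt n) ^ r * apow n 1 0 * (BSt n) ^ (-r)) * apow n (-l) s := by
        rw [← BSa_eq]; group
    _ = apow n l s * apow n 1 (0 - r) * apow n (-l) s := by rw [t_conj_apow]
    _ = apow n 1 (0 - r) * (apow n l s * apow n (-l) s) := by
        rw [apow_comm n l s]; group
    _ = apow n 1 (-r) := by rw [apow_mul_same, add_neg_cancel, apow_zero, mul_one, zero_sub]

lemma conj_t (n l s r : ℤ) :
    (apow n l s * (BSt n) ^ r) * BSt n * (apow n l s * (BSt n) ^ r)⁻¹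
      = apow n ((1 - n) * l) s * BSt n := by
  rw [mul_inv_rev, apow_inv]
  calc apow n l s * (BSt n) ^ r * BSt n * (((BSt n) ^ r)⁻¹ * apow n (-l) s)
      = apow n l s * ((BSt n) ^ (1:ℤ) * apow n (-l) s * (BSt n) ^ (-(1:ℤ))) * BSt n := by
        group
    _ = apow n l s * apow n (-l) (s - 1) * BSt n := by rw [t_conj_apow]
    _ = apow n l s * apow n (n * (-l)) s * BSt n := by
        have h := apow_succ n (-l) (s-1)
        rw [sub_add_cancel] at h
        rw [← h]
    _ = apow n ((1 - n) * l) s * BSt n := by rw [apow_mul_same]; ring_nf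

lemma alpha_int (n k' p' r : ℤ) (hn : 2 ≤ n) (hp' : 0 ≤ p')
    (hα : (k' : ℚ) / (n : ℚ) ^ p' = (n : ℚ) ^ r) :
    0 ≤ r + p' ∧ k' = n ^ (r + p').toNat := by
  have hn0 : (0:ℚ) < (n:ℚ) := by exact_mod_cast (by omega : (0:ℤ) < n)
  have hne : (n:ℚ) ≠ 0 := ne_of_gt hn0
  have hk : (k':ℚ) = (n:ℚ) ^ (r + p') := by
    rw [div_eq_iff (zpow_ne_zero _ hne)] at hα
    rw [hα, ← zpow_add₀ hne]
  have h1 : 0 ≤ r + p' := by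
    by_contra hlt
    push_neg at hlt
    have hgt1 : (1:ℚ) < (n:ℚ) := by exact_mod_cast (by omega : (1:ℤ) < n)
    have hlt1 : (n:ℚ) ^ (r + p') < 1 := zpow_lt_one_of_neg₀ hgt1 hlt
    have hpos : (0:ℚ) < (n:ℚ) ^ (r + p') := zpow_pos hn0 _
    have hk1 : (0:ℤ) < k' := by exact_mod_cast hk ▸ hpos
    have : (1:ℚ) ≤ (k':ℚ) := by exact_mod_cast hk1
    linarith [hk ▸ this]
  refine ⟨h1, ?_⟩
  have : (k':ℚ) = ((n:ℚ)) ^ ((r + p').toNat) := by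
    rw [hk, ← zpow_natCast, Int.toNat_of_nonneg h1]
  exact_mod_cast this

lemma beta_int (n l s l' q' : ℤ) (hn : 2 ≤ n) (hs : 0 ≤ s) (hq' : 0 ≤ q')
    (hβ : (l' : ℚ) / (n : ℚ) ^ q' = (1 - (n : ℚ)) * ((l : ℚ) / (n : ℚ) ^ s)) :
    l' * n ^ s.toNat = (1 - n) * l * n ^ q'.toNat := by
  have hne : (n:ℚ) ≠ 0 := by exact_mod_cast (by omega : n ≠ 0)
  have e1 : (n:ℚ) ^ q' = (n:ℚ) ^ (q'.toNat) := by
    rw [← zpow_natCast, Int.toNat_of_nonneg hq']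
  have e2 : (n:ℚ) ^ s = (n:ℚ) ^ (s.toNat) := by
    rw [← zpow_natCast, Int.toNat_of_nonneg hs]
  rw [e1, e2] at hβ
  field_simp at hβ
  have : (l' : ℚ) * (n:ℚ) ^ s.toNat = (1 - (n:ℚ)) * l * (n:ℚ) ^ q'.toNat := by
    linear_combination hβ
  exact_mod_cast this

/-- equal fractions with nonneg denominators give equal `apow`s -/
lemma apow_eq_apow (n m p m' p' : ℤ) (hp : 0 ≤ p) (hp' : 0 ≤ p')
    (h : m * n ^ p'.toNat = m' * n ^ p.toNat) : apow n m p = apow n m' p' := by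
  rw [apow_up n m p (p + p') (by omega), apow_up n m' p' (p + p') (by omega)]
  have h1 : (p + p' - p).toNat = p'.toNat := by omega
  have h2 : (p + p' - p').toNat = p.toNat := by omega
  rw [h1, h2]
  congr 1
  linarith [h]

/-- The main conjugation identity. -/
lemma main_conj (n : ℤ) (hn : 2 ≤ n) (l s r k' p' l' q' : ℤ)
    (hs : 0 ≤ s) (hp' : 0 ≤ p') (hq' : 0 ≤ q')
    (hα : (k' : ℚ) / (n : ℚ) ^ p' = (n : ℚ) ^ r)
    (hβ : (l' : ℚ) / (n : ℚ) ^ q' = (1 - (n : ℚ)) * ((l : ℚ) / (n : ℚ) ^ s))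
    (φ : BS n →* BS n)
    (ha : φ (BSa n) = apow n k' p') (ht : φ (BSt n) = apow n l' q' * BSt n) :
    ∀ x : BS n, (apow n l s * (BSt n) ^ r) * x * (apow n l s * (BSt n) ^ r)⁻¹ = φ x := by
  obtain ⟨h1, hk⟩ := alpha_int n k' p' r hn hp' hα
  -- apow n k' p' = apow n 1 (-r)
  have hA : apow n k' p' = apow n 1 (-r) := by
    have := apow_up n 1 (-r) p' (by omega)
    rw [show (p' - -r).toNat = (r + p').toNat by omega, mul_one] at this
    rw [hk, this]
  have hB : apow n l' q' = apow n ((1 - n) * l) s := by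
    have hb := beta_int n l s l' q' hn hs hq' hβ
    exact apow_eq_apow n l' q' ((1-n)*l) s hq' hs (by linarith [hb])
  set g := apow n l s * (BSt n) ^ r with hg
  let H : Subgroup (BS n) :=
    { carrier := {x | g * x * g⁻¹ = φ x}
      mul_mem' := by
        intro x y hx hy
        simp only [Set.mem_setOf_eq] at *
        rw [map_mul, ← hx, ← hy]
        group
      one_mem' := by simp
      inv_mem' := by
        intro x hx
        simp only [Set.mem_setOf_eq] at *
        rw [map_inv, ← hx]
        group }
  intro x
  refine PresentedGroup.generated_by (BSrel n) H ?_ x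
  intro j
  cases j
  · show g * BSa n * g⁻¹ = φ (BSa n)
    rw [ha, hA, hg, conj_a]
  · show g * BSt n * g⁻¹ = φ (BSt n)
    rw [ht, hB, hg, conj_t]

/-- Every element of `BS(n,1)` has the form `a^(m/n^s) t^r`. -/
lemma exists_form (n : ℤ) (g : BS n) :
    ∃ m s r : ℤ, 0 ≤ s ∧ g = apow n m s * (BSt n) ^ r := by
  let H : Subgroup (BS n) :=
    { carrier := {g | ∃ m s r : ℤ, 0 ≤ s ∧ g = apow n m s * (BSt n) ^ r}
      mul_mem' := by
        rintro x y ⟨m, s, r, hs, rfl⟩ ⟨m', s', r', hs', rfl⟩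
        refine ⟨n ^ (max s (max (s' - r) 0) - s).toNat * m +
          n ^ (max s (max (s' - r) 0) - (s' - r)).toNat * m',
          max s (max (s' - r) 0), r + r', by omega, ?_⟩
        set c := max s (max (s' - r) 0) with hc
        calc apow n m s * (BSt n) ^ r * (apow n m' s' * (BSt n) ^ r')
            = apow n m s * ((BSt n) ^ r * apow n m' s' * (BSt n) ^ (-r)) *
                (BSt n) ^ (r + r') := by group
          _ = apow n m s * apow n m' (s' - r) * (BSt n) ^ (r + r') := by
              rw [t_conj_apow]
          _ = _ := by
              rw [apow_up n m s c (le_max_left _ _),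
                apow_up n m' (s' - r) c (le_trans (le_max_left _ _) (le_max_right _ _)),
                apow_mul_same]
      one_mem' := ⟨0, 0, 0, le_refl 0, by rw [apow_zero]; group⟩
      inv_mem' := by
        rintro x ⟨m, s, r, hs, rfl⟩
        refine ⟨n ^ (max (s + r) 0 - (s + r)).toNat * (-m), max (s + r) 0, -r,
          le_max_right _ _, ?_⟩
        calc (apow n m s * (BSt n) ^ r)⁻¹
            = ((BSt n) ^ (-r) * apow n (-m) s * (BSt n) ^ (-(-r))) * (BSt n) ^ (-r) := by
              rw [mul_inv_rev, apow_inv]; group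
          _ = apow n (-m) (s + r) * (BSt n) ^ (-r) := by
              rw [t_conj_apow, sub_neg_eq_add]
          _ = _ := by rw [apow_up n (-m) (s + r) (max (s + r) 0) (le_max_left _ _)] }
  exact PresentedGroup.generated_by (BSrel n) H
    (fun j => by
      cases j
      · exact ⟨1, 0, 0, le_refl 0, by rw [← BSa_eq, zpow_zero, mul_one]; rfl⟩
      · exact ⟨0, 0, 1, le_refl 0, by rw [apow_zero, one_mul, zpow_one]; rfl⟩) g

/-- In `BS(n,1)`, conjugation `x ↦ (a^β t^r) x (a^β t^r)⁻¹` by `a^β t^r`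
(with `β = l/n^s`) equals the automorphism `φ_{α',β'}` with `α' = n^r` and `β' = (1-n)β`;
hence an automorphism `ψ` of `BS(n,1)` is inner iff `ψ = φ_{α,β}` with `α = n^{r₀}` for
some `r₀ ∈ ℤ` and `β ∈ (n-1)ℤ[1/n]`.  (Elements of `ℤ[1/n]` are represented as quotients
`k/nᵖ`, and `φ_{α,β}` is determined by `a ↦ a^α`, `t ↦ a^β t`.) -/
theorem stmt14 (n : ℤ) (hn : 2 ≤ n) (l s r k' p' l' q' : ℤ)
    (hs : 0 ≤ s) (hp' : 0 ≤ p') (hq' : 0 ≤ q')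
    (hα : (k' : ℚ) / (n : ℚ) ^ p' = (n : ℚ) ^ r)
    (hβ : (l' : ℚ) / (n : ℚ) ^ q' = (1 - (n : ℚ)) * ((l : ℚ) / (n : ℚ) ^ s))
    (φ : BS n →* BS n)
    (ha : φ (BSa n) = apow n k' p') (ht : φ (BSt n) = apow n l' q' * BSt n) :
    (∀ x : BS n, (apow n l s * (BSt n) ^ r) * x * (apow n l s * (BSt n) ^ r)⁻¹ = φ x)
    ∧ (∀ ψ : BS n ≃* BS n,
        (∃ g : BS n, ∀ x : BS n, ψ x = g * x * g⁻¹) ↔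
        ∃ (r₀ k₀ p₀ l₀ q₀ m₀ s₀ : ℤ), 0 ≤ p₀ ∧ 0 ≤ q₀ ∧ 0 ≤ s₀ ∧
          (k₀ : ℚ) / (n : ℚ) ^ p₀ = (n : ℚ) ^ r₀ ∧
          (l₀ : ℚ) / (n : ℚ) ^ q₀ = ((n : ℚ) - 1) * ((m₀ : ℚ) / (n : ℚ) ^ s₀) ∧
          ψ (BSa n) = apow n k₀ p₀ ∧ ψ (BSt n) = apow n l₀ q₀ * BSt n) := by
  constructor
  · exact main_conj n hn l s r k' p' l' q' hs hp' hq' hα hβ φ ha ht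
  · intro ψ
    constructor
    · rintro ⟨g, hg⟩
      obtain ⟨m, s₁, r₁, hs₁, rfl⟩ := exists_form n g
      by_cases hr : 0 ≤ r₁
      · refine ⟨r₁, n ^ r₁.toNat, 0, (1 - n) * m, s₁, -m, s₁,
          le_refl 0, hs₁, hs₁, ?_, ?_, ?_, ?_⟩
        · rw [zpow_zero, div_one]
          push_cast
          rw [← zpow_natCast, Int.toNat_of_nonneg hr]
        · push_cast; ring
        · rw [hg, conj_a]
          have h2 := apow_rescale n 1 (-r₁) r₁.toNat
          rw [mul_one, show -r₁ + (r₁.toNat : ℤ) = 0 by omega] at h2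
          exact h2
        · rw [hg, conj_t]
      · refine ⟨r₁, 1, -r₁, (1 - n) * m, s₁, -m, s₁,
          by omega, hs₁, hs₁, ?_, ?_, ?_, ?_⟩
        · push_cast
          rw [zpow_neg, one_div, inv_inv]
        · push_cast; ring
        · rw [hg, conj_a]
        · rw [hg, conj_t]
    · rintro ⟨r₀, k₀, p₀, l₀, q₀, m₀, s₀, hp₀, hq₀, hs₀, hα₀, hβ₀, ha₀, ht₀⟩
      refine ⟨apow n (-m₀) s₀ * (BSt n) ^ r₀, fun x => ?_⟩
      have hβ' : (l₀ : ℚ) / (n : ℚ) ^ q₀ = (1 - (n : ℚ)) * (((-m₀ : ℤ) : ℚ) / (n : ℚ) ^ s₀) := by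
        push_cast
        linear_combination hβ₀
      exact (main_conj n hn (-m₀) s₀ r₀ k₀ p₀ l₀ q₀ hs₀ hp₀ hq₀ hα₀ hβ'
        ψ.toMonoidHom ha₀ ht₀ x).symm
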